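/- There is no perfect coloring of H with parameter matrix [[0,3],[2,1]]; that is, no map φ : G → Fin 2 has the property that every vertex colored 0 has all 3 of its neighbors colored 1, while every vertex colored 1 has exactly 2 neighbors colored 0 and 1 neighbor colored 1. -/

import Mathlib

/-!
Write `c v ∈ {0, 1}` for the colour of `v`; the parameter matrix says exactly that the colours of
the three neighbours of `u` sum to `3 - 2 c u`. Take `u` of colour 0. Its neighbours `u·i` have
colour 1, so each `u·i` has exactly one neighbour of colour 1 among `u·ij`, `u·ik`. These six
vertices lie in pairs `u·ij`, `u·kj` on the three hexagons through `u`, and the two vertices of a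
pair have the same colour. Hence the number of colour-1 vertices among them is both 3 and even.
-/

namespace HexGrid

/-- Relations of the hexagonal grid group: x² = y² = z² = (x·y·z)² = 1. -/
def hexRels : Set (FreeGroup (Fin 3)) :=
  {FreeGroup.of 0 * FreeGroup.of 0,
   FreeGroup.of 1 * FreeGroup.of 1,
   FreeGroup.of 2 * FreeGroup.of 2,
   FreeGroup.of 0 * FreeGroup.of 1 * FreeGroup.of 2 *
     (FreeGroup.of 0 * FreeGroup.of 1 * FreeGroup.of 2)}

/-- The group `G = ⟨x, y, z ∣ x² = y² = z² = (x·y·z)² = 1⟩`. -/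
abbrev G := PresentedGroup hexRels

/-- The generators of `G`. -/
def gen (i : Fin 3) : G := PresentedGroup.of i

def x : G := gen 0
def y : G := gen 1
def z : G := gen 2

lemma gen_mul_self (i : Fin 3) : gen i * gen i = 1 := by
  have h : FreeGroup.of i * FreeGroup.of i ∈ Subgroup.normalClosure hexRels :=
    Subgroup.subset_normalClosure (by fin_cases i <;> simp [hexRels])
  exact (QuotientGroup.eq_one_iff _).mpr h

/-- The infinite hexagonal grid `H`: the Cayley graph of `G` with respect to `{x, y, z}`;
`u` and `v` are adjacent iff `v ∈ {u·x, u·y, u·z}`. -/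
def H : SimpleGraph G where
  Adj u v := u ≠ v ∧ ∃ i : Fin 3, v = u * gen i
  symm := by
    refine ⟨?_⟩
    rintro u v ⟨hne, i, rfl⟩
    exact ⟨hne.symm, i, by rw [mul_assoc, gen_mul_self, mul_one]⟩
  loopless := by refine ⟨?_⟩; rintro u ⟨hne, -⟩; exact hne rfl

/-- `φ` is a perfect coloring of `H` with parameter matrix `A`: for every vertex `u` and
every color `j`, the number of neighbors of `u` in `H` colored `j` equals `A (φ u) j`. -/
def IsPerfectColoring {k : ℕ} (φ : G → Fin k) (A : Matrix (Fin k) (Fin k) ℕ) : Prop :=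
  ∀ u : G, ∀ j : Fin k, Set.ncard {v : G | H.Adj u v ∧ φ v = j} = A (φ u) j

/-- A matrix is tridiagonal if its entries vanish whenever the indices differ by more
than one. -/
def IsTridiagonal {k : ℕ} (A : Matrix (Fin k) (Fin k) ℕ) : Prop :=
  ∀ i j : Fin k, ((i : ℕ) + 1 < (j : ℕ) ∨ (j : ℕ) + 1 < (i : ℕ)) → A i j = 0

/-- Two colorings are equivalent if one is obtained from the other by composing with a
graph automorphism of `H`. -/
def EquivColoring {k : ℕ} (φ ψ : G → Fin k) : Prop :=
  ∃ g : H ≃g H, ψ = fun v => φ (g v)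

open Finset

def toZModCube : G →* Multiplicative (Fin 3 → ZMod 2) :=
  PresentedGroup.toGroup (f := fun i => Multiplicative.ofAdd (Pi.single i 1)) <| by
    rintro r (rfl | rfl | rfl | rfl) <;> decide

lemma toZModCube_gen (i : Fin 3) : toZModCube (gen i) = Multiplicative.ofAdd (Pi.single i 1) :=
  PresentedGroup.toGroup.of _

lemma gen_injective : Function.Injective gen := by
  intro i j h
  have := congrArg toZModCube h
  rw [toZModCube_gen, toZModCube_gen] at this
  revert this; fin_cases i <;> fin_cases j <;> decide

lemma gen_ne_one (i : Fin 3) : gen i ≠ 1 := by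
  intro h
  have := congrArg toZModCube h
  rw [toZModCube_gen, map_one] at this
  revert this; fin_cases i <;> decide

lemma gen_mul_gen_mul_cancel (i : Fin 3) (g : G) : gen i * (gen i * g) = g := by
  rw [← mul_assoc, gen_mul_self, one_mul]

lemma mul_gen_mul_gen_cancel (g : G) (i : Fin 3) : g * gen i * gen i = g := by
  rw [mul_assoc, gen_mul_self, mul_one]

lemma gen_mul_gen_mul_gen_comm (i j k : Fin 3) :
    gen i * gen j * gen k = gen k * gen j * gen i := by
  have hxyz : x * y * z = z * y * x := by
    have h : (x * y * z) * (x * y * z) = 1 :=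
      (QuotientGroup.eq_one_iff _).mpr (Subgroup.subset_normalClosure (by simp [hexRels]))
    rw [eq_inv_of_mul_eq_one_left h]
    simp only [mul_inv_rev, x, y, z, inv_eq_of_mul_eq_one_right (gen_mul_self _), mul_assoc]
  -- The other two orders are conjugates of `xyz = zyx` by `x` and by `z`.
  have hxzy : x * z * y = y * z * x := by
    calc x * z * y = x * (z * y * x) * x := by simp only [x, ← mul_assoc, mul_gen_mul_gen_cancel]
      _ = x * (x * y * z) * x := by rw [hxyz]
      _ = y * z * x := by simp only [x, mul_assoc, gen_mul_gen_mul_cancel]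
  have hyxz : y * x * z = z * x * y := by
    calc y * x * z = z * (z * y * x) * z := by simp only [z, mul_assoc, gen_mul_gen_mul_cancel]
      _ = z * (x * y * z) * z := by rw [hxyz]
      _ = z * x * y := by simp only [z, ← mul_assoc, mul_gen_mul_gen_cancel]
  fin_cases i <;> fin_cases j <;> fin_cases k <;>
    first
    | exact hxyz | exact hxyz.symm | exact hxzy | exact hxzy.symm | exact hyxz | exact hyxz.symm
    | simp only [mul_assoc, gen_mul_self, one_mul, mul_one]

lemma adj_iff {u v : G} : H.Adj u v ↔ ∃ i, v = u * gen i := by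
  refine ⟨fun h => h.2, fun ⟨i, hi⟩ => ⟨?_, i, hi⟩⟩
  rintro rfl
  exact gen_ne_one i (left_eq_mul.mp hi)

lemma ncard_adj_and (u : G) (p : G → Prop) [DecidablePred p] :
    {v | H.Adj u v ∧ p v}.ncard = #{i | p (u * gen i)} := by
  have hinj : Function.Injective (u * gen ·) := (mul_right_injective u).comp gen_injective
  have : {v | H.Adj u v ∧ p v} = ({i | p (u * gen i)} : Finset (Fin 3)).map ⟨_, hinj⟩ := by
    ext v
    simp only [adj_iff, Set.mem_ofPred_eq, Finset.coe_map, Function.Embedding.coeFn_mk,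
      Finset.coe_filter, Finset.mem_univ, true_and, Set.mem_image]
    grind
  rw [this, Set.ncard_coe_finset, Finset.card_map]

lemma IsPerfectColoring.card_filter_gen {k : ℕ} {φ : G → Fin k} {A : Matrix (Fin k) (Fin k) ℕ}
    (hφ : IsPerfectColoring φ A) (u : G) (j : Fin k) :
    #{i | φ (u * gen i) = j} = A (φ u) j := by
  rw [← ncard_adj_and u (φ · = j), hφ]

lemma IsPerfectColoring.sum_val_mul_gen {φ : G → Fin 2} {A : Matrix (Fin 2) (Fin 2) ℕ}
    (hφ : IsPerfectColoring φ A) (u : G) : ∑ i, (φ (u * gen i) : ℕ) = A (φ u) 1 := by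
  have hval : ∀ t : Fin 2, (t : ℕ) = if t = 1 then 1 else 0 := by decide
  simp only [hval, ← Finset.card_filter, hφ.card_filter_gen u 1]

lemma sum_fin_three {M : Type*} [AddCommMonoid M] (f : Fin 3 → M) {i j k : Fin 3}
    (hij : i ≠ j) (hik : i ≠ k) (hjk : j ≠ k) : ∑ l, f l = f i + f j + f k := by
  fin_cases i <;> fin_cases j <;> fin_cases k <;> simp_all [Fin.sum_univ_three] <;> abel

section LocalRule

variable {c : G → ℕ} (hc : ∀ v, c v ≤ 1) (hsum : ∀ u, ∑ i, c (u * gen i) + 2 * c u = 3)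
include hc hsum

lemma exists_eq_zero : ∃ u, c u = 0 := by
  by_contra! h
  have h1 v : c v = 1 := Nat.le_antisymm (hc v) (Nat.one_le_iff_ne_zero.mpr (h v))
  simpa [Fin.sum_univ_three, h1] using hsum 1

lemma mul_gen_eq_one_of_eq_zero {u : G} (hu : c u = 0) (i : Fin 3) : c (u * gen i) = 1 := by
  have h := hsum u
  rw [Fin.sum_univ_three] at h
  have := hc (u * gen 0)
  have := hc (u * gen 1)
  have := hc (u * gen 2)
  fin_cases i <;> dsimp only [Fin.zero_eta, Fin.mk_one, Fin.reduceFinMk] <;> omega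

variable {i j k : Fin 3} (hij : i ≠ j) (hik : i ≠ k) (hjk : j ≠ k)
include hij hik hjk

lemma sum_second_neighbors_eq_one {u : G} (hu : c u = 0) :
    c (u * gen i * gen j) + c (u * gen i * gen k) = 1 := by
  have h := sum_fin_three (fun l => c (u * gen i * gen l)) hij hik hjk
  rw [mul_gen_mul_gen_cancel] at h
  have := hsum (u * gen i)
  have := mul_gen_eq_one_of_eq_zero hc hsum hu i
  omega

/-- `u·ij` and `u·kj` have the common neighbour `w = u·ijk = u·kji`, and their neighbours `u·i`,
`u·k` have value 1. As a vertex of value 1 has exactly one neighbour of value 1 and a vertex of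
value 0 has none of value 0, `u·ij` has value 1 iff `w` has value 0 iff `u·kj` has value 1. -/
lemma hexagon_eq {u : G} (hu : c u = 0) : c (u * gen i * gen j) = c (u * gen k * gen j) := by
  have hw : u * gen k * gen j * gen i = u * gen i * gen j * gen k := by
    simpa only [mul_assoc] using congrArg (u * ·) (gen_mul_gen_mul_gen_comm k j i)
  have hp := sum_fin_three (fun l => c (u * gen i * gen j * gen l)) hij hik hjk
  have hq := sum_fin_three (fun l => c (u * gen k * gen j * gen l)) hij hik hjk
  rw [mul_gen_mul_gen_cancel] at hp hq
  rw [hw] at hq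
  have := mul_gen_eq_one_of_eq_zero hc hsum hu i
  have := mul_gen_eq_one_of_eq_zero hc hsum hu k
  have := hsum (u * gen i * gen j)
  have := hsum (u * gen k * gen j)
  have := hc (u * gen i * gen j * gen i)
  have := hc (u * gen k * gen j * gen k)
  have := hc (u * gen i * gen j * gen k)
  omega

end LocalRule

/-- The array `[03-21]` is infeasible: there is no perfect coloring of `H` with
parameter matrix `[[0,3],[2,1]]`. -/
theorem no_coloring_03_21 : ¬ ∃ φ : G → Fin 2, IsPerfectColoring φ !![0,3;2,1] := by
  rintro ⟨φ, hφ⟩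
  have hc : ∀ v, (φ v : ℕ) ≤ 1 := fun v => Nat.le_of_lt_succ (φ v).isLt
  have hsum u : ∑ i, (φ (u * gen i) : ℕ) + 2 * φ u = 3 := by
    rw [hφ.sum_val_mul_gen]
    generalize φ u = t
    fin_cases t <;> rfl
  obtain ⟨u, hu⟩ := exists_eq_zero hc hsum
  have hij : (0 : Fin 3) ≠ 1 := by decide
  have hik : (0 : Fin 3) ≠ 2 := by decide
  have hjk : (1 : Fin 3) ≠ 2 := by decide
  have := sum_second_neighbors_eq_one hc hsum hij hik hjk hu
  have := sum_second_neighbors_eq_one hc hsum hij.symm hjk hik hu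
  have := sum_second_neighbors_eq_one hc hsum hik.symm hjk.symm hij hu
  have := hexagon_eq hc hsum hij hik hjk hu
  have := hexagon_eq hc hsum hik hij hjk.symm hu
  have := hexagon_eq hc hsum hij.symm hjk hik hu
  omega

end HexGrid
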